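/- arXiv:2306.10168 — 3 statements merged into one kernel-verified Lean document; each statement's English description precedes it below -/
import Mathlib

section
/- For diagonal real matrices Λ, Δ, the maximum of Tr(ΛᵀPΔPᵀ) over P ∈ O(n) is attained at some permutation matrix P. -/
/-!
With `Λ = diagonal a` and `Δ = diagonal b`, `Tr(ΛᵀQΔQᵀ) = ∑ i j, a i * Q i j ^ 2 * b j = a ⬝ᵥ (Q ⊙ Q) *ᵥ b`
is a linear function of `Q ⊙ Q`, which is doubly stochastic when `Q` is orthogonal. By
Birkhoff–von Neumann a linear (indeed any convex) functional on the doubly stochastic matrices is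
maximised at a permutation matrix `P`, and `P ⊙ P = P`, so `P` is also a maximiser over `O(n)`.
-/

open Matrix

variable {R n : Type*} [Fintype n] [DecidableEq n]

theorem exists_permMatrix_isMaxOn_doublyStochastic [Field R] [LinearOrder R]
    [IsStrictOrderedRing R] {f : Matrix n n R → R} (hf : ConvexOn R (doublyStochastic R n) f) :
    ∃ σ : Equiv.Perm n, IsMaxOn f (doublyStochastic R n) (σ.permMatrix R) := by
  obtain ⟨σ, hσ⟩ := Finite.exists_max fun σ : Equiv.Perm n => f (σ.permMatrix R)
  refine ⟨σ, fun M hM => ?_⟩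
  have hperm : {τ.permMatrix R | τ : Equiv.Perm n} ⊆ doublyStochastic R n := by
    rintro _ ⟨τ, rfl⟩
    exact permMatrix_mem_doublyStochastic
  rw [doublyStochastic_eq_convexHull_permMatrix] at hM
  obtain ⟨_, ⟨τ, rfl⟩, hτ⟩ := hf.exists_ge_of_mem_convexHull hperm hM
  exact hτ.trans (hσ τ)

omit [DecidableEq n] in
theorem convexOn_dotProduct_mulVec [CommSemiring R] [PartialOrder R] [IsOrderedRing R]
    (a b : n → R) {s : Set (Matrix n n R)} (hs : Convex R s) :
    ConvexOn R s fun M => a ⬝ᵥ M *ᵥ b :=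
  LinearMap.convexOn
    { toFun M := a ⬝ᵥ M *ᵥ b
      map_add' M N := by simp only [add_mulVec, dotProduct_add]
      map_smul' c M := by simp only [smul_mulVec, dotProduct_smul, RingHom.id_apply] } hs

theorem trace_diagonal_mul_mul_diagonal_mul_transpose [CommSemiring R] (a b : n → R)
    (Q : Matrix n n R) :
    trace (diagonal a * Q * diagonal b * Qᵀ) = a ⬝ᵥ (Q ⊙ Q) *ᵥ b := by
  simp only [trace, diag, mul_apply, diagonal_apply, dotProduct, mulVec, hadamard_apply]
  simp [Finset.mul_sum, mul_comm, mul_left_comm]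

theorem hadamard_self_mem_doublyStochastic [CommRing R] [LinearOrder R] [IsStrictOrderedRing R]
    {Q : Matrix n n R} (hQ : Qᵀ * Q = 1) : Q ⊙ Q ∈ doublyStochastic R n := by
  have hQ' : Q * Qᵀ = 1 := mul_eq_one_comm.mp hQ
  refine mem_doublyStochastic_iff_sum.mpr ⟨fun i j => mul_self_nonneg _, fun i => ?_, fun j => ?_⟩
  · simpa [mul_apply, one_apply] using congrFun (congrFun hQ' i) i
  · simpa [mul_apply, one_apply] using congrFun (congrFun hQ j) j

omit [Fintype n] in
theorem hadamard_permMatrix_self [MulZeroOneClass R] (σ : Equiv.Perm n) :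
    σ.permMatrix R ⊙ σ.permMatrix R = σ.permMatrix R := by
  ext i j
  by_cases h : σ i = j <;> simp [h]

theorem transpose_permMatrix_mul_self [NonAssocSemiring R] (σ : Equiv.Perm n) :
    (σ.permMatrix R)ᵀ * σ.permMatrix R = 1 := by
  rw [transpose_permMatrix, ← permMatrix_mul, mul_inv_cancel, permMatrix_one]

theorem trace_max_at_permutation (n : ℕ) (a b : Fin n → ℝ) :
    ∃ (σ : Equiv.Perm (Fin n)) (P : Matrix (Fin n) (Fin n) ℝ),
      (∀ i j, P i j = if σ i = j then 1 else 0) ∧ Pᵀ * P = 1 ∧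
      IsGreatest
        {x : ℝ | ∃ Q : Matrix (Fin n) (Fin n) ℝ, Qᵀ * Q = 1 ∧
          x = Matrix.trace ((Matrix.diagonal a)ᵀ * Q * Matrix.diagonal b * Qᵀ)}
        (Matrix.trace ((Matrix.diagonal a)ᵀ * P * Matrix.diagonal b * Pᵀ)) := by
  obtain ⟨σ, hσ⟩ := exists_permMatrix_isMaxOn_doublyStochastic
    (convexOn_dotProduct_mulVec a b convex_doublyStochastic)
  refine ⟨σ, σ.permMatrix ℝ, fun i j => by simp [PEquiv.toMatrix_apply],
    transpose_permMatrix_mul_self σ, ⟨_, transpose_permMatrix_mul_self σ, rfl⟩, ?_⟩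
  rintro _ ⟨Q, hQ, rfl⟩
  simp only [diagonal_transpose, trace_diagonal_mul_mul_diagonal_mul_transpose,
    hadamard_permMatrix_self]
  exact hσ (hadamard_self_mem_doublyStochastic hQ)
end

section
/- For diagonal real matrices Λ, Δ, the minimum of ‖Λ - PΔPᵀ‖_F over P ∈ O(n) equals the minimum of ‖Λ - PΔPᵀ‖_F over permutation matrices P, which equals the minimum over permutations σ of (Σ_i (Λ_{ii} - Δ_{σ(i)σ(i)})²)^{1/2}. -/
open Matrix

noncomputable def frobNorm {n : ℕ} (M : Matrix (Fin n) (Fin n) ℝ) : ℝ :=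
  Real.sqrt (Matrix.trace (Mᵀ * M))

def IsPermMatrix {n : ℕ} (P : Matrix (Fin n) (Fin n) ℝ) : Prop :=
  ∃ σ : Equiv.Perm (Fin n), ∀ i j, P i j = if σ i = j then 1 else 0

/-- A matrix with the given entries equals the permutation matrix of `σ`. -/
lemma eq_permMatrix {n : ℕ} {P : Matrix (Fin n) (Fin n) ℝ} {σ : Equiv.Perm (Fin n)}
    (hP : ∀ i j, P i j = if σ i = j then 1 else 0) : P = σ.permMatrix ℝ := by
  ext i j
  simp [hP, Equiv.Perm.permMatrix, PEquiv.toMatrix_apply, Equiv.toPEquiv_apply]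

lemma permMatrix_orth {n : ℕ} (σ : Equiv.Perm (Fin n)) :
    (σ.permMatrix ℝ)ᵀ * σ.permMatrix ℝ = 1 := by
  rw [Equiv.Perm.permMatrix, ← PEquiv.toMatrix_symm, ← PEquiv.toMatrix_trans,
    ← Equiv.toPEquiv_symm, ← Equiv.toPEquiv_trans]
  simp

lemma perm_conj_diagonal {n : ℕ} (σ : Equiv.Perm (Fin n)) (b : Fin n → ℝ) :
    σ.permMatrix ℝ * Matrix.diagonal b * (σ.permMatrix ℝ)ᵀ =
      Matrix.diagonal (fun i => b (σ i)) := by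
  ext i j
  simp only [mul_apply, diagonal_apply, transpose_apply, Equiv.Perm.permMatrix,
    PEquiv.toMatrix_apply, Equiv.toPEquiv_apply, Option.mem_def, Option.some.injEq,
    ite_mul, one_mul, zero_mul, mul_ite, mul_one, mul_zero, Finset.sum_ite_eq,
    Finset.mem_univ, if_true]
  rcases eq_or_ne i j with rfl | hij
  · simp
  · have h1 : σ j ≠ σ i := fun h => hij (σ.injective h.symm)
    simp [h1, hij]

lemma frobNorm_diag_perm {n : ℕ} (a b : Fin n → ℝ) (σ : Equiv.Perm (Fin n)) :
    frobNorm (Matrix.diagonal a - σ.permMatrix ℝ * Matrix.diagonal b * (σ.permMatrix ℝ)ᵀ) =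
      Real.sqrt (∑ i, (a i - b (σ i)) ^ 2) := by
  rw [frobNorm, perm_conj_diagonal, diagonal_sub, diagonal_transpose, diagonal_mul_diagonal,
    trace_diagonal]
  congr 1
  refine Finset.sum_congr rfl fun i _ => ?_
  simp [Pi.sub_apply, sq]

/-- The trace formula for an orthogonal conjugation. -/
lemma trace_formula {n : ℕ} (a b : Fin n → ℝ) (P : Matrix (Fin n) (Fin n) ℝ)
    (hP : Pᵀ * P = 1) :
    Matrix.trace ((Matrix.diagonal a - P * Matrix.diagonal b * Pᵀ)ᵀ *
        (Matrix.diagonal a - P * Matrix.diagonal b * Pᵀ)) =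
      ∑ i, (a i) ^ 2 + ∑ i, (b i) ^ 2 - 2 * ∑ i, ∑ j, a i * b j * (P i j) ^ 2 := by
  set A := Matrix.diagonal a with hA
  set B := P * Matrix.diagonal b * Pᵀ with hB
  have hAT : Aᵀ = A := diagonal_transpose a
  have hBT : Bᵀ = B := by
    rw [hB, transpose_mul, transpose_mul, transpose_transpose, diagonal_transpose, mul_assoc]
  have hPPt : P * Pᵀ = 1 := mul_eq_one_comm.mp hP
  have hBB : Matrix.trace (B * B) = ∑ i, (b i) ^ 2 := by
    have : B * B = P * (Matrix.diagonal b * Matrix.diagonal b) * Pᵀ := by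
      rw [hB]
      calc P * Matrix.diagonal b * Pᵀ * (P * Matrix.diagonal b * Pᵀ)
          = P * Matrix.diagonal b * (Pᵀ * P) * Matrix.diagonal b * Pᵀ := by
            simp only [mul_assoc]
        _ = P * (Matrix.diagonal b * Matrix.diagonal b) * Pᵀ := by
            rw [hP]; simp only [mul_one, mul_assoc]
    rw [this, trace_mul_comm, ← mul_assoc, hP, one_mul, diagonal_mul_diagonal, trace_diagonal]
    exact Finset.sum_congr rfl fun i _ => (sq (b i)).symm
  have hAA : Matrix.trace (A * A) = ∑ i, (a i) ^ 2 := by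
    rw [hA, diagonal_mul_diagonal, trace_diagonal]
    exact Finset.sum_congr rfl fun i _ => (sq (a i)).symm
  have hAB : Matrix.trace (A * B) = ∑ i, ∑ j, a i * b j * (P i j) ^ 2 := by
    rw [Matrix.trace]
    refine Finset.sum_congr rfl fun i _ => ?_
    rw [Matrix.diag]
    rw [mul_apply]
    rw [Finset.sum_eq_single i]
    · rw [hA, hB, diagonal_apply_eq, mul_apply, Finset.mul_sum]
      refine Finset.sum_congr rfl fun j _ => ?_
      rw [mul_apply]
      rw [Finset.sum_eq_single j]
      · simp [diagonal_apply_eq, transpose_apply, sq]; ring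
      · intro k _ hk; simp [diagonal_apply_ne _ hk]
      · simp
    · intro k _ hk
      rw [hA, diagonal_apply_ne _ (Ne.symm hk), zero_mul]
    · simp
  have expand : (A - B)ᵀ * (A - B) = A * A - A * B - B * A + B * B := by
    rw [transpose_sub, hAT, hBT, sub_mul, mul_sub, mul_sub, sub_sub]
    abel
  rw [expand, trace_add, trace_sub, trace_sub, hAA, hBB, trace_mul_comm B A, hAB]
  ring

lemma sq_entries_doublyStochastic {n : ℕ} (P : Matrix (Fin n) (Fin n) ℝ)
    (hP : Pᵀ * P = 1) :
    (Matrix.of fun i j => (P i j) ^ 2) ∈ doublyStochastic ℝ (Fin n) := by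
  have hPPt : P * Pᵀ = 1 := mul_eq_one_comm.mp hP
  rw [mem_doublyStochastic_iff_sum]
  refine ⟨fun i j => by simp only [Matrix.of_apply]; positivity, fun i => ?_, fun j => ?_⟩
  · have := congrFun (congrFun hPPt i) i
    simp only [mul_apply, transpose_apply, one_apply_eq] at this
    rw [← this]
    exact Finset.sum_congr rfl fun j _ => by simp [sq]
  · have := congrFun (congrFun hP j) j
    simp only [mul_apply, transpose_apply, one_apply_eq] at this
    rw [← this]
    exact Finset.sum_congr rfl fun i _ => by simp [sq]

/-- For a doubly stochastic matrix, the bilinear form is at most its value at some permutation. -/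
lemma exists_perm_ge {n : ℕ} (a b : Fin n → ℝ) (Q : Matrix (Fin n) (Fin n) ℝ)
    (hQ : Q ∈ doublyStochastic ℝ (Fin n)) :
    ∃ σ : Equiv.Perm (Fin n), ∑ i, ∑ j, a i * b j * Q i j ≤ ∑ i, a i * b (σ i) := by
  obtain ⟨w, hw0, hw1, hwQ⟩ := exists_eq_sum_perm_of_mem_doublyStochastic hQ
  set g : Equiv.Perm (Fin n) → ℝ := fun σ => ∑ i, a i * b (σ i) with hg
  obtain ⟨σ, -, hσ⟩ := Finset.exists_max_image Finset.univ g Finset.univ_nonempty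
  refine ⟨σ, ?_⟩
  have hsum : ∑ i, ∑ j, a i * b j * Q i j = ∑ τ : Equiv.Perm (Fin n), w τ * g τ := by
    have hQ' : ∀ i j, Q i j = ∑ τ : Equiv.Perm (Fin n), w τ * (if τ i = j then 1 else 0) := by
      intro i j
      rw [← hwQ]
      simp [Matrix.sum_apply, Matrix.smul_apply, smul_eq_mul, Equiv.Perm.permMatrix,
        PEquiv.toMatrix_apply, Equiv.toPEquiv_apply, mul_ite, mul_one, mul_zero]
    have inner : ∀ (τ : Equiv.Perm (Fin n)) i,
        ∑ j, a i * b j * (w τ * if τ i = j then 1 else 0) = w τ * (a i * b (τ i)) := by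
      intro τ i
      rw [Fintype.sum_eq_single (τ i)]
      · simp [mul_comm, mul_left_comm]
      · intro j hj
        simp [Ne.symm hj]
    calc ∑ i, ∑ j, a i * b j * Q i j
        = ∑ i, ∑ j, ∑ τ : Equiv.Perm (Fin n),
            a i * b j * (w τ * if τ i = j then 1 else 0) := by
          simp_rw [hQ', Finset.mul_sum]
      _ = ∑ i, ∑ τ : Equiv.Perm (Fin n), ∑ j,
            a i * b j * (w τ * if τ i = j then 1 else 0) :=
          Finset.sum_congr rfl fun i _ => Finset.sum_comm
      _ = ∑ τ : Equiv.Perm (Fin n), ∑ i, ∑ j,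
            a i * b j * (w τ * if τ i = j then 1 else 0) := Finset.sum_comm
      _ = ∑ τ : Equiv.Perm (Fin n), w τ * g τ := by
          refine Finset.sum_congr rfl fun τ _ => ?_
          rw [Finset.sum_congr rfl fun i _ => inner τ i, ← Finset.mul_sum]
  rw [hsum]
  calc ∑ τ : Equiv.Perm (Fin n), w τ * g τ
      ≤ ∑ τ : Equiv.Perm (Fin n), w τ * g σ :=
        Finset.sum_le_sum fun τ _ => mul_le_mul_of_nonneg_left (hσ τ (Finset.mem_univ τ)) (hw0 τ)
    _ = g σ := by rw [← Finset.sum_mul, hw1, one_mul]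

theorem diag_min_over_orthogonal_eq_min_over_perms (n : ℕ) (a b : Fin n → ℝ) :
    sInf {x : ℝ | ∃ P : Matrix (Fin n) (Fin n) ℝ, Pᵀ * P = 1 ∧
        x = frobNorm (Matrix.diagonal a - P * Matrix.diagonal b * Pᵀ)} =
      sInf {x : ℝ | ∃ P : Matrix (Fin n) (Fin n) ℝ, IsPermMatrix P ∧
        x = frobNorm (Matrix.diagonal a - P * Matrix.diagonal b * Pᵀ)} ∧
    sInf {x : ℝ | ∃ P : Matrix (Fin n) (Fin n) ℝ, IsPermMatrix P ∧
        x = frobNorm (Matrix.diagonal a - P * Matrix.diagonal b * Pᵀ)} =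
      sInf {x : ℝ | ∃ σ : Equiv.Perm (Fin n),
        x = Real.sqrt (∑ i, (a i - b (σ i)) ^ 2)} := by
  set S₁ := {x : ℝ | ∃ P : Matrix (Fin n) (Fin n) ℝ, Pᵀ * P = 1 ∧
      x = frobNorm (Matrix.diagonal a - P * Matrix.diagonal b * Pᵀ)} with hS₁
  set S₂ := {x : ℝ | ∃ P : Matrix (Fin n) (Fin n) ℝ, IsPermMatrix P ∧
      x = frobNorm (Matrix.diagonal a - P * Matrix.diagonal b * Pᵀ)} with hS₂
  set S₃ := {x : ℝ | ∃ σ : Equiv.Perm (Fin n),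
      x = Real.sqrt (∑ i, (a i - b (σ i)) ^ 2)} with hS₃
  -- S₂ = S₃
  have hperm_isperm : ∀ σ : Equiv.Perm (Fin n), IsPermMatrix (σ.permMatrix ℝ) := by
    intro σ
    exact ⟨σ, fun i j => by
      simp [Equiv.Perm.permMatrix, PEquiv.toMatrix_apply, Equiv.toPEquiv_apply]⟩
  have h23 : S₂ = S₃ := by
    ext x
    constructor
    · rintro ⟨P, ⟨σ, hPσ⟩, rfl⟩
      refine ⟨σ, ?_⟩
      rw [eq_permMatrix hPσ, frobNorm_diag_perm]
    · rintro ⟨σ, rfl⟩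
      exact ⟨σ.permMatrix ℝ, hperm_isperm σ, (frobNorm_diag_perm a b σ).symm⟩
  refine ⟨?_, by rw [h23]⟩
  -- nonemptiness and boundedness
  have hne₂ : S₂.Nonempty := by
    refine ⟨_, (1 : Equiv.Perm (Fin n)).permMatrix ℝ, hperm_isperm 1, rfl⟩
  have hne₁ : S₁.Nonempty := by
    obtain ⟨x, P, hP, hx⟩ := hne₂
    obtain ⟨σ, hσ⟩ := hP
    exact ⟨x, P, by rw [eq_permMatrix hσ]; exact permMatrix_orth σ, hx⟩
  have hbdd : ∀ S ⊆ {x : ℝ | 0 ≤ x}, BddBelow S := fun S hS => ⟨0, fun x hx => hS hx⟩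
  have hb₁ : BddBelow S₁ := by
    refine hbdd _ fun x hx => ?_
    obtain ⟨P, _, rfl⟩ := hx
    exact Real.sqrt_nonneg _
  have hb₂ : BddBelow S₂ := by
    refine hbdd _ fun x hx => ?_
    obtain ⟨P, _, rfl⟩ := hx
    exact Real.sqrt_nonneg _
  -- S₂ ⊆ S₁
  have hsub : S₂ ⊆ S₁ := by
    rintro x ⟨P, ⟨σ, hσ⟩, rfl⟩
    exact ⟨P, by rw [eq_permMatrix hσ]; exact permMatrix_orth σ, rfl⟩
  refine le_antisymm (csInf_le_csInf hb₁ hne₂ hsub) ?_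
  -- hard direction: every orthogonal value dominates some permutation value
  refine le_csInf hne₁ ?_
  rintro x ⟨P, hP, rfl⟩
  obtain ⟨σ, hσ⟩ := exists_perm_ge a b (Matrix.of fun i j => (P i j) ^ 2)
    (sq_entries_doublyStochastic P hP)
  refine csInf_le hb₂ ⟨σ.permMatrix ℝ, hperm_isperm σ, rfl⟩ |>.trans ?_
  rw [frobNorm_diag_perm, frobNorm]
  apply Real.sqrt_le_sqrt
  rw [trace_formula a b P hP]
  have hbσ : ∑ i, (b (σ i)) ^ 2 = ∑ i, (b i) ^ 2 :=
    Equiv.sum_comp σ (fun i => (b i) ^ 2)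
  have hexp : ∑ i, (a i - b (σ i)) ^ 2 =
      ∑ i, (a i) ^ 2 + ∑ i, (b i) ^ 2 - 2 * ∑ i, a i * b (σ i) := by
    have h : ∀ i, (a i - b (σ i)) ^ 2 =
        (a i) ^ 2 + (b (σ i)) ^ 2 - 2 * (a i * b (σ i)) := fun i => by ring
    rw [Finset.sum_congr rfl fun i _ => h i, Finset.sum_sub_distrib,
      Finset.sum_add_distrib, hbσ, ← Finset.mul_sum]
  rw [hexp]
  simp only [Matrix.of_apply] at hσ
  linarith
end

section
/- Let A = V_x Λ V_xᵀ and B = V_y Δ V_yᵀ with V_x, V_y orthogonal and Λ, Δ diagonal (i.e., A, B real symmetric). Then min over C ∈ O(n) of ‖A - CBC⁻¹‖_F equals min over permutations σ of (Σ_i (λ_i - δ_{σ(i)})²)^{1/2}, where λ_i, δ_j are the eigenvalues of A and B. -/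
open Matrix

variable {n : ℕ}

lemma perm_transpose (σ : Equiv.Perm (Fin n)) :
    (σ.permMatrix ℝ)ᵀ = (σ⁻¹).permMatrix ℝ := by
  rw [Equiv.Perm.permMatrix, ← PEquiv.toMatrix_symm, ← Equiv.toPEquiv_symm]
  rfl

lemma perm_orth (σ : Equiv.Perm (Fin n)) :
    (σ.permMatrix ℝ)ᵀ * σ.permMatrix ℝ = 1 := by
  rw [perm_transpose, Equiv.Perm.permMatrix, Equiv.Perm.permMatrix, ← PEquiv.toMatrix_trans,
    ← Equiv.toPEquiv_trans]
  rw [show σ⁻¹.trans σ = Equiv.refl (Fin n) by ext x; simp, Equiv.toPEquiv_refl,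
    PEquiv.toMatrix_refl]

lemma perm_conj_diag (σ : Equiv.Perm (Fin n)) (d : Fin n → ℝ) :
    σ.permMatrix ℝ * Matrix.diagonal d * (σ.permMatrix ℝ)ᵀ = Matrix.diagonal (fun i => d (σ i)) := by
  rw [perm_transpose, Equiv.Perm.permMatrix, PEquiv.toMatrix_toPEquiv_mul,
    Equiv.Perm.permMatrix, PEquiv.mul_toMatrix_toPEquiv]
  ext i j
  by_cases h : i = j <;>
    simp [Matrix.diagonal, h, Equiv.apply_eq_iff_eq, Equiv.Perm.inv_def, Equiv.eq_symm_apply]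

lemma trace_sq (M : Matrix (Fin n) (Fin n) ℝ) :
    trace (Mᵀ * M) = ∑ i, ∑ j, (M i j)^2 := by
  simp [Matrix.trace, Matrix.diag, Matrix.mul_apply, sq]
  exact Finset.sum_comm

lemma trace_diag_sq (f : Fin n → ℝ) :
    trace ((Matrix.diagonal f)ᵀ * Matrix.diagonal f) = ∑ i, (f i)^2 := by
  simp [Matrix.diagonal_transpose, Matrix.diagonal_mul_diagonal, Matrix.trace_diagonal, sq]

lemma trace_orth_conj (Q M : Matrix (Fin n) (Fin n) ℝ) (hQ : Qᵀ * Q = 1) :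
    trace ((Q * M * Qᵀ)ᵀ * (Q * M * Qᵀ)) = trace (Mᵀ * M) := by
  have h1 : (Q * M * Qᵀ)ᵀ * (Q * M * Qᵀ) = Q * (Mᵀ * (M * Qᵀ)) := by
    rw [transpose_mul, transpose_mul, transpose_transpose]
    rw [Matrix.mul_assoc, Matrix.mul_assoc, Matrix.mul_assoc]
    congr 1
    rw [← Matrix.mul_assoc Qᵀ, hQ, Matrix.one_mul]
  rw [h1, Matrix.trace_mul_comm, Matrix.mul_assoc, Matrix.mul_assoc, hQ, Matrix.mul_one]

lemma trace_diag_mul_conj (l d : Fin n → ℝ) (W : Matrix (Fin n) (Fin n) ℝ) :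
    trace (Matrix.diagonal l * (W * Matrix.diagonal d * Wᵀ)) =
      ∑ i, ∑ j, l i * d j * (W i j)^2 := by
  simp [Matrix.trace, Matrix.diag, Matrix.mul_apply, Matrix.diagonal, Finset.mul_sum, sq]
  congr 1; ext i; congr 1; ext j; ring

lemma permMatrix_functional (l d : Fin n → ℝ) (σ : Equiv.Perm (Fin n)) :
    ∑ i, ∑ j, l i * d j * (σ.permMatrix ℝ) i j = ∑ i, l i * d (σ i) := by
  simp [Equiv.Perm.permMatrix, PEquiv.toMatrix_apply, Equiv.toPEquiv_apply,
    mul_ite, Finset.sum_ite_eq, Finset.sum_ite_eq']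

lemma key (l d : Fin n → ℝ) (W : Matrix (Fin n) (Fin n) ℝ) (hW : Wᵀ * W = 1) :
    ∃ σ : Equiv.Perm (Fin n), ∑ i, (l i - d (σ i))^2 ≤
      trace ((Matrix.diagonal l - W * Matrix.diagonal d * Wᵀ)ᵀ *
             (Matrix.diagonal l - W * Matrix.diagonal d * Wᵀ)) := by
  have hW' : W * Wᵀ = 1 := mul_eq_one_comm.mp hW
  set N := W * Matrix.diagonal d * Wᵀ with hN
  have hNt : Nᵀ = N := by
    rw [hN, transpose_mul, transpose_mul, transpose_transpose, diagonal_transpose,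
      Matrix.mul_assoc]
  have hNN : trace (N * N) = ∑ i, d i ^ 2 := by
    rw [hN]
    simp only [Matrix.mul_assoc]
    rw [← Matrix.mul_assoc Wᵀ W, hW, Matrix.one_mul, Matrix.trace_mul_comm]
    simp only [Matrix.mul_assoc]
    rw [hW, Matrix.mul_one, diagonal_mul_diagonal, Matrix.trace_diagonal]
    simp [sq]
  have hLN : trace (Matrix.diagonal l * N) = ∑ i, ∑ j, l i * d j * (W i j)^2 :=
    trace_diag_mul_conj l d W
  have hLL : trace (Matrix.diagonal l * Matrix.diagonal l) = ∑ i, l i ^ 2 := by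
    rw [diagonal_mul_diagonal, Matrix.trace_diagonal]; simp [sq]
  have hT : trace ((Matrix.diagonal l - N)ᵀ * (Matrix.diagonal l - N)) =
      ∑ i, l i ^ 2 + ∑ i, d i ^ 2 - 2 * ∑ i, ∑ j, l i * d j * (W i j)^2 := by
    rw [transpose_sub, diagonal_transpose, hNt, Matrix.sub_mul, Matrix.mul_sub,
      Matrix.mul_sub, Matrix.trace_sub, Matrix.trace_sub, Matrix.trace_sub,
      Matrix.trace_mul_comm N (Matrix.diagonal l), hNN, hLN, hLL]
    ring
  set S : Matrix (Fin n) (Fin n) ℝ := Matrix.of fun i j => (W i j) ^ 2 with hS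
  have hSd : S ∈ doublyStochastic ℝ (Fin n) := by
    rw [mem_doublyStochastic_iff_sum]
    refine ⟨fun i j => sq_nonneg _, fun i => ?_, fun j => ?_⟩
    · have := congrFun (congrFun hW' i) i
      simpa [hS, Matrix.mul_apply, Matrix.one_apply, sq] using this
    · have := congrFun (congrFun hW j) j
      simpa [hS, Matrix.mul_apply, Matrix.one_apply, sq] using this
  obtain ⟨w, hw0, hw1, hwsum⟩ := exists_eq_sum_perm_of_mem_doublyStochastic hSd
  have hterm : ∀ σ : Equiv.Perm (Fin n),
      ∑ i, ∑ j, l i * d j * (w σ * (σ.permMatrix ℝ) i j) = w σ * ∑ i, l i * d (σ i) := by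
    intro σ
    rw [← permMatrix_functional l d σ, Finset.mul_sum]
    refine Finset.sum_congr rfl fun i _ => ?_
    rw [Finset.mul_sum]
    exact Finset.sum_congr rfl fun j _ => by ring
  have hgS : ∑ i, ∑ j, l i * d j * S i j =
      ∑ σ : Equiv.Perm (Fin n), w σ * ∑ i, l i * d (σ i) := by
    rw [← hwsum]
    simp only [Matrix.sum_apply, Matrix.smul_apply, smul_eq_mul]
    calc ∑ i, ∑ j, l i * d j * ∑ σ : Equiv.Perm (Fin n), w σ * (σ.permMatrix ℝ) i j
        = ∑ i, ∑ j, ∑ σ : Equiv.Perm (Fin n), l i * d j * (w σ * (σ.permMatrix ℝ) i j) := by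
          simp only [Finset.mul_sum]
      _ = ∑ i, ∑ σ : Equiv.Perm (Fin n), ∑ j, l i * d j * (w σ * (σ.permMatrix ℝ) i j) :=
          Finset.sum_congr rfl fun i _ => Finset.sum_comm
      _ = ∑ σ : Equiv.Perm (Fin n), ∑ i, ∑ j, l i * d j * (w σ * (σ.permMatrix ℝ) i j) :=
          Finset.sum_comm
      _ = ∑ σ : Equiv.Perm (Fin n), w σ * ∑ i, l i * d (σ i) :=
          Finset.sum_congr rfl fun σ _ => hterm σ
  obtain ⟨σ₀, -, hσ₀⟩ := Finset.exists_max_image Finset.univ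
    (fun σ : Equiv.Perm (Fin n) => ∑ i, l i * d (σ i)) ⟨1, Finset.mem_univ 1⟩
  have hle : ∑ i, ∑ j, l i * d j * (W i j)^2 ≤ ∑ i, l i * d (σ₀ i) := by
    have : ∑ i, ∑ j, l i * d j * S i j = ∑ i, ∑ j, l i * d j * (W i j)^2 := rfl
    rw [← this, hgS]
    calc ∑ σ : Equiv.Perm (Fin n), w σ * ∑ i, l i * d (σ i)
        ≤ ∑ σ : Equiv.Perm (Fin n), w σ * ∑ i, l i * d (σ₀ i) :=
          Finset.sum_le_sum fun σ _ =>
            mul_le_mul_of_nonneg_left (hσ₀ σ (Finset.mem_univ σ)) (hw0 σ)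
      _ = ∑ i, l i * d (σ₀ i) := by rw [← Finset.sum_mul, hw1, one_mul]
  refine ⟨σ₀, ?_⟩
  rw [hT]
  have h2 : ∑ i, d (σ₀ i) ^ 2 = ∑ i, d i ^ 2 := Equiv.sum_comp σ₀ fun i => d i ^ 2
  have hsum : ∑ i, (l i - d (σ₀ i))^2 =
      ∑ i, l i ^ 2 + ∑ i, d i ^ 2 - 2 * ∑ i, l i * d (σ₀ i) := by
    rw [← h2, ← Finset.sum_add_distrib, Finset.mul_sum, ← Finset.sum_sub_distrib]
    exact Finset.sum_congr rfl fun i _ => by ring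
  rw [hsum]
  linarith [hle]

lemma mul3_orth (P Q R : Matrix (Fin n) (Fin n) ℝ) (hP : Pᵀ * P = 1) (hQ : Qᵀ * Q = 1)
    (hR : Rᵀ * R = 1) : (P * Q * R)ᵀ * (P * Q * R) = 1 := by
  rw [transpose_mul, transpose_mul]
  simp only [Matrix.mul_assoc]
  rw [← Matrix.mul_assoc Pᵀ P, hP, Matrix.one_mul, ← Matrix.mul_assoc Qᵀ Q, hQ,
    Matrix.one_mul, hR]


theorem symmetric_dsa_eq_eigenvalue_matching (n : ℕ)
    (Vx Vy : Matrix (Fin n) (Fin n) ℝ) (l d : Fin n → ℝ)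
    (hVx : Vxᵀ * Vx = 1) (hVy : Vyᵀ * Vy = 1)
    (A B : Matrix (Fin n) (Fin n) ℝ)
    (hA : A = Vx * Matrix.diagonal l * Vxᵀ)
    (hB : B = Vy * Matrix.diagonal d * Vyᵀ) :
    sInf {x : ℝ | ∃ C : Matrix (Fin n) (Fin n) ℝ, Cᵀ * C = 1 ∧
        x = frobNorm (A - C * B * C⁻¹)} =
      sInf {x : ℝ | ∃ σ : Equiv.Perm (Fin n),
        x = Real.sqrt (∑ i, (l i - d (σ i)) ^ 2)} := by
  have hVx' : Vx * Vxᵀ = 1 := mul_eq_one_comm.mp hVx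
  have hVy' : Vy * Vyᵀ = 1 := mul_eq_one_comm.mp hVy
  have hRne : {x : ℝ | ∃ σ : Equiv.Perm (Fin n),
      x = Real.sqrt (∑ i, (l i - d (σ i)) ^ 2)}.Nonempty := ⟨_, 1, rfl⟩
  have hRbd : BddBelow {x : ℝ | ∃ σ : Equiv.Perm (Fin n),
      x = Real.sqrt (∑ i, (l i - d (σ i)) ^ 2)} := by
    refine ⟨0, fun x hx => ?_⟩
    obtain ⟨σ, rfl⟩ := hx
    exact Real.sqrt_nonneg _
  have hLbd : BddBelow {x : ℝ | ∃ C : Matrix (Fin n) (Fin n) ℝ, Cᵀ * C = 1 ∧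
      x = frobNorm (A - C * B * C⁻¹)} := by
    refine ⟨0, fun x hx => ?_⟩
    obtain ⟨C, _, rfl⟩ := hx
    exact Real.sqrt_nonneg _
  apply le_antisymm
  · -- sInf L ≤ sInf R
    apply le_csInf hRne
    rintro r ⟨σ, rfl⟩
    apply csInf_le hLbd
    set C : Matrix (Fin n) (Fin n) ℝ := Vx * σ.permMatrix ℝ * Vyᵀ with hCdef
    have hC : Cᵀ * C = 1 :=
      mul3_orth Vx (σ.permMatrix ℝ) Vyᵀ hVx (perm_orth σ)
        (by rw [transpose_transpose]; exact hVy')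
    have hCi : C⁻¹ = Cᵀ := Matrix.inv_eq_left_inv hC
    refine ⟨C, hC, ?_⟩
    have hCBC : C * B * C⁻¹ = Vx * Matrix.diagonal (fun i => d (σ i)) * Vxᵀ := by
      rw [hCi, hB, hCdef, ← perm_conj_diag σ d]
      simp only [transpose_mul, transpose_transpose, Matrix.mul_assoc]
      rw [← Matrix.mul_assoc Vyᵀ Vy, hVy, Matrix.one_mul,
        ← Matrix.mul_assoc Vyᵀ Vy, hVy, Matrix.one_mul]
    have hdiff : A - C * B * C⁻¹ =
        Vx * Matrix.diagonal (fun i => l i - d (σ i)) * Vxᵀ := by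
      rw [hA, hCBC, ← Matrix.diagonal_sub, Matrix.mul_sub, Matrix.sub_mul]
    rw [hdiff, frobNorm, trace_orth_conj Vx _ hVx, trace_diag_sq]
  · -- sInf R ≤ sInf L
    refine le_csInf ⟨frobNorm (A - 1 * B * 1⁻¹), ?_⟩ ?_
    · exact ⟨1, by rw [transpose_one, Matrix.mul_one], rfl⟩
    rintro x ⟨C, hC, rfl⟩
    have hCi : C⁻¹ = Cᵀ := Matrix.inv_eq_left_inv hC
    set W : Matrix (Fin n) (Fin n) ℝ := Vxᵀ * C * Vy with hWdef
    have hW : Wᵀ * W = 1 :=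
      mul3_orth Vxᵀ C Vy (by rw [transpose_transpose]; exact hVx') hC hVy
    have hACB : A - C * B * C⁻¹ =
        Vx * (Matrix.diagonal l - W * Matrix.diagonal d * Wᵀ) * Vxᵀ := by
      rw [hCi, hA, hB, Matrix.mul_sub, Matrix.sub_mul, hWdef]
      simp only [transpose_mul, transpose_transpose, Matrix.mul_assoc]
      rw [← Matrix.mul_assoc Vx Vxᵀ, hVx', Matrix.one_mul, Matrix.mul_one]
    obtain ⟨σ, hσ⟩ := key l d W hW
    calc sInf {x : ℝ | ∃ σ : Equiv.Perm (Fin n),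
          x = Real.sqrt (∑ i, (l i - d (σ i)) ^ 2)}
        ≤ Real.sqrt (∑ i, (l i - d (σ i)) ^ 2) := csInf_le hRbd ⟨σ, rfl⟩
      _ ≤ frobNorm (A - C * B * C⁻¹) := by
          rw [hACB, frobNorm, trace_orth_conj Vx _ hVx]
          exact Real.sqrt_le_sqrt hσ
end
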